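/- arXiv:1809.09285 — 6 statements merged into one kernel-verified Lean document; each statement's English description precedes it below -/
import Mathlib

section
/- Let p be an odd prime and K = ℚ(ζ) the p-th cyclotomic field. If a nonzero rational number x is a p-th power of an element of K, then x is a p-th power of a rational number; that is, K^{×p} ∩ ℚ^× = ℚ^{×p}. -/
/-!
If `x` is not a `p`-th power in `K`, then `X ^ p - x` is irreducible over `K`, so it is the
minimal polynomial of any root `y`, and `p` divides the degree of every finite extension
containing `y`. The cyclotomic field has degree `p - 1` over `ℚ`, which `p` does not divide.
-/

open Polynomial

theorem exists_pow_eq_of_pow_eq_algebraMap_of_not_dvd_finrank {K L : Type*} [Field K] [Field L]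
    [Algebra K L] [FiniteDimensional K L] {p : ℕ} (hp : p.Prime)
    (hdeg : ¬ p ∣ Module.finrank K L) {x : K} {y : L} (hy : y ^ p = algebraMap K L x) :
    ∃ z : K, z ^ p = x := by
  by_contra! hx
  have hmonic : (X ^ p - C x).Monic := monic_X_pow_sub_C x hp.ne_zero
  have hroot : aeval y (X ^ p - C x) = 0 := by simp [hy]
  have hmin : minpoly K y = X ^ p - C x :=
    (minpoly.eq_of_irreducible_of_monic (X_pow_sub_C_irreducible_of_prime hp hx) hroot
      hmonic).symm
  refine hdeg ?_
  simpa [hmin, natDegree_X_pow_sub_C] using minpoly.degree_dvd (IsIntegral.of_finite K y)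

theorem statement2_general (p : ℕ) (hp : p.Prime)
    (K : Type*) [Field K] [Algebra ℚ K]
    [IsCyclotomicExtension {p} ℚ K]
    (x : ℚ) (y : K) (hy : y ^ p = algebraMap ℚ K x) :
    ∃ z : ℚ, z ^ p = x := by
  have : NeZero p := ⟨hp.ne_zero⟩
  have : FiniteDimensional ℚ K := IsCyclotomicExtension.finite_of_singleton p ℚ K
  have hfinrank : Module.finrank ℚ K = p - 1 := by
    rw [IsCyclotomicExtension.finrank K (cyclotomic.irreducible_rat hp.pos), Nat.totient_prime hp]
  refine exists_pow_eq_of_pow_eq_algebraMap_of_not_dvd_finrank hp ?_ hy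
  rw [hfinrank]
  exact Nat.not_dvd_of_pos_of_lt (Nat.sub_pos_of_lt hp.one_lt) (Nat.sub_lt hp.pos one_pos)

/-- Let `p` be an odd prime and `K = ℚ(ζ)` the `p`-th cyclotomic field.
If a nonzero rational number `x` is a `p`-th power of an element of `K`, then `x` is a
`p`-th power of a rational number; that is, `K^{×p} ∩ ℚ^× = ℚ^{×p}`. -/
theorem statement2 (p : ℕ) (hp : p.Prime) (hodd : Odd p)
    (K : Type*) [Field K] [Algebra ℚ K]
    [IsCyclotomicExtension {p} ℚ K]
    (x : ℚ) (hx : x ≠ 0) (y : K) (hy : y ^ p = algebraMap ℚ K x) :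
    ∃ z : ℚ, z ^ p = x :=
  statement2_general p hp K x y hy
end

section
/- Let p be an odd prime, q a prime power with q ≡ −1 (mod p), and F a finite field with q² elements. Let χ be a multiplicative character of F with values in ℂ of order exactly p, and let r and s be positive integers with r + s < p. Then the Jacobi sum J(χ^r, χ^s) = ∑_{x ∈ F} χ^r(x)·χ^s(1 − x) equals q. -/
/-!
Write `K = 𝔽_q ⊆ F` for the field fixed by `σ : x ↦ x ^ q`, and `Tr x = x + σ x` for the trace
`F → K`. Since `p` is prime to `2 (q - 1)`, a character `η` with `η ^ p = 1` is trivial on every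
`x` with `x ^ (2 (q - 1)) = 1`, in particular on `Kˣ` and on the nonzero kernel of `Tr` (where
`x ^ (q - 1) = -1`). For a nontrivial additive character `ψ` of `K`, triviality on `Kˣ` makes the
twists `x ↦ ψ (u * Tr x)`, `u ∈ Kˣ`, all have the same Gauss sum `g`; summing over `u ∈ K` and
using orthogonality on `K` gives `(q - 1) g = q (#ker Tr - 1) = q (q - 1)`, so `g = q`.
This holds for `χ ^ r`, `χ ^ s` and `χ ^ (r + s)`, and `g(χ^r) g(χ^s) = g(χ^(r+s)) J(χ^r, χ^s)`.
-/

open Finset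

lemma MulChar.apply_eq_one_of_pow_eq_one {M R : Type*} [CommMonoid M] [CommMonoidWithZero R]
    {η : MulChar M R} {p m : ℕ} (hη : η ^ p = 1) (hpm : p.Coprime m) (hm : m ≠ 0) {x : M}
    (hx : x ^ m = 1) : η x = 1 := by
  obtain ⟨u, rfl⟩ := IsUnit.of_pow_eq_one hx hm
  refine (pow_eq_one_iff_of_coprime hpm).mp ⟨?_, ?_⟩
  · rw [← MulChar.pow_apply_coe, hη, MulChar.one_apply_coe]
  · rw [← map_pow, hx, map_one]

lemma Nat.coprime_two_mul_sub_one_of_natCast_eq_neg_one {p q : ℕ} (hp : p.Prime) (hodd : Odd p)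
    (hq : (q : ZMod p) = -1) : p.Coprime (2 * (q - 1)) := by
  have : Fact p.Prime := ⟨hp⟩
  have hq1 : 1 ≤ q := by
    by_contra! h
    simp_all
  rw [hp.coprime_iff_not_dvd, ← ZMod.natCast_eq_zero_iff]
  push_cast [hq1, hq]
  rw [show 2 * (-1 - 1) = -((2 ^ 2 : ℕ) : ZMod p) by norm_num, neg_eq_zero,
    ZMod.natCast_eq_zero_iff]
  intro h
  exact absurd ((Nat.prime_dvd_prime_iff_eq hp Nat.prime_two).mp (hp.dvd_of_dvd_pow h) ▸ hodd)
    (by decide)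

section

variable {F : Type*} [Field F]

open Polynomial in
lemma card_filter_pow_eq_mul_le [Fintype F] [DecidableEq F] {q : ℕ} (hq : 1 < q) (a : F) :
    #{x | x ^ q = a * x} ≤ q := by
  have hdeg : (X ^ q - C a * X : F[X]).natDegree = q := by
    rw [natDegree_sub_eq_left_of_natDegree_lt, natDegree_X_pow]
    exact (natDegree_C_mul_le _ _).trans_lt (by rwa [natDegree_X, natDegree_X_pow])
  refine (card_le_degree_of_subset_roots fun x hx ↦ ?_).trans_eq hdeg
  rw [mem_roots', IsRoot, eval_sub, eval_pow, eval_mul, eval_C, eval_X, sub_eq_zero]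
  exact ⟨ne_zero_of_natDegree_gt (hdeg ▸ hq), (mem_filter.mp hx).2⟩

lemma pow_two_mul_sub_one_eq_one {q : ℕ} (hq : 1 ≤ q) {x : F} (hx0 : x ≠ 0)
    (hx : x ^ q = x ∨ x ^ q = -x) : x ^ (2 * (q - 1)) = 1 := by
  rw [pow_mul', pow_sub₀ x hx0 hq, pow_one]
  rcases hx with h | h <;> simp [h, hx0]

lemma one_lt_of_card_eq_sq [Fintype F] {q : ℕ} (hcard : Fintype.card F = q ^ 2) : 1 < q := by
  have := Fintype.one_lt_card (α := F)
  rw [hcard] at this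
  by_contra! h
  interval_cases q <;> simp_all

namespace RingHom

variable (σ : F →+* F)

def fixedSubfield : Subfield F := σ.eqLocusField (RingHom.id F)

@[simp] lemma mem_fixedSubfield {x : F} : x ∈ σ.fixedSubfield ↔ σ x = x := Iff.rfl

variable {σ}

lemma involutive_of_apply_eq_pow [Fintype F] {q : ℕ} (hσq : ∀ x, σ x = x ^ q)
    (hcard : Fintype.card F = q ^ 2) : Function.Involutive σ := fun x ↦ by
  rw [hσq, hσq, ← pow_mul, ← sq, ← hcard, FiniteField.pow_card]

variable (hσ : Function.Involutive σ)

def traceToFixed : F →+ σ.fixedSubfield where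
  toFun x := ⟨x + σ x, by simp [hσ x, add_comm]⟩
  map_zero' := by ext; simp
  map_add' x y := by ext; simp only [map_add, Subfield.coe_add]; ring

@[simp] lemma coe_traceToFixed (x : F) : (traceToFixed hσ x : F) = x + σ x := rfl

lemma traceToFixed_mul (u : σ.fixedSubfield) (x : F) :
    traceToFixed hσ (u * x) = u * traceToFixed hσ x := by
  ext
  have hu : σ u = u := u.2
  simp only [coe_traceToFixed, map_mul, hu, Subfield.coe_mul]
  ring

variable [Fintype F] {R : Type*} [CommRing R]

lemma gaussSum_comp_traceToFixed_mulShift (η : MulChar F R)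
    (hηK : ∀ u : σ.fixedSubfield, u ≠ 0 → η u = 1) (ψ : AddChar σ.fixedSubfield R)
    {u : σ.fixedSubfield} (hu : u ≠ 0) :
    gaussSum η ((ψ.compAddMonoidHom (traceToFixed hσ)).mulShift u) =
      gaussSum η (ψ.compAddMonoidHom (traceToFixed hσ)) := by
  have hu' : (u : F) ≠ 0 := by simpa using hu
  conv_rhs => rw [← gaussSum_mulShift η _ (Units.mk0 _ hu')]
  rw [Units.val_mk0, hηK u hu, one_mul]

theorem gaussSum_comp_traceToFixed_mul [IsDomain R] [DecidableEq F] {η : MulChar F R}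
    (hη : η ≠ 1) (hηK : ∀ u : σ.fixedSubfield, u ≠ 0 → η u = 1)
    {ψ : AddChar σ.fixedSubfield R} (hψ : ψ ≠ 1) :
    (Nat.card σ.fixedSubfield - 1 : R) * gaussSum η (ψ.compAddMonoidHom (traceToFixed hσ)) =
      Nat.card σ.fixedSubfield * ∑ x with traceToFixed hσ x = 0, η x := by
  classical
  set Ψ := ψ.compAddMonoidHom (traceToFixed hσ)
  have hshift (u : σ.fixedSubfield) :
      gaussSum η (Ψ.mulShift u) = if u = 0 then 0 else gaussSum η Ψ := by
    split_ifs with hu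
    · rw [hu, Subfield.coe_zero, AddChar.mulShift_zero, gaussSum_one_right hη]
    · exact gaussSum_comp_traceToFixed_mulShift hσ η hηK ψ hu
  calc (Nat.card σ.fixedSubfield - 1 : R) * gaussSum η Ψ
      = ∑ u : σ.fixedSubfield, gaussSum η (Ψ.mulShift u) := by
        simp only [hshift]
        rw [sum_ite, sum_const_zero, zero_add, sum_const, filter_ne',
          card_erase_of_mem (mem_univ _), card_univ, nsmul_eq_mul, Nat.cast_pred Fintype.card_pos,
          Nat.card_eq_fintype_card]
    _ = ∑ x : F, η x * ∑ u : σ.fixedSubfield, ψ (u * traceToFixed hσ x) := by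
        simp only [gaussSum, mul_sum]
        rw [sum_comm]
        simp only [Ψ, AddChar.mulShift_apply, AddChar.compAddMonoidHom_apply, traceToFixed_mul]
    _ = _ := by
        simp only [AddChar.sum_mulShift _ (AddChar.IsPrimitive.of_ne_one hψ)]
        simp [Nat.card_eq_fintype_card, sum_filter, mul_sum, mul_comm]

variable {q : ℕ}

lemma card_fixedSubfield_eq_and_card_ker_traceToFixed_eq [DecidableEq F]
    (hσq : ∀ x, σ x = x ^ q) (hcard : Fintype.card F = q ^ 2) :
    Nat.card σ.fixedSubfield = q ∧ #{x | traceToFixed hσ x = 0} = q := by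
  classical
  have hq := one_lt_of_card_eq_sq hcard
  have hK : Nat.card σ.fixedSubfield ≤ q := by
    rw [Nat.card_eq_fintype_card, Fintype.card_subtype]
    convert card_filter_pow_eq_mul_le hq (1 : F) using 3
    simp [hσq]
  have hker : #{x | traceToFixed hσ x = 0} ≤ q := by
    convert card_filter_pow_eq_mul_le hq (-1 : F) using 3
    simp only [← Subtype.coe_inj, coe_traceToFixed, ZeroMemClass.coe_zero, hσq]
    rw [neg_one_mul, eq_neg_iff_add_eq_zero, add_comm]
  -- `Tr` maps `F` into `K`, so `#F ≤ #ker Tr * #K`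
  have hprod : q ^ 2 ≤ #{x | traceToFixed hσ x = 0} * Nat.card σ.fixedSubfield := by
    rw [← hcard, ← Nat.card_eq_fintype_card, ← (traceToFixed hσ).ker.card_mul_index,
      AddSubgroup.index_ker]
    refine Nat.mul_le_mul (le_of_eq ?_) (Nat.card_le_card_of_injective _ Subtype.coe_injective)
    rw [Nat.card_eq_fintype_card, Fintype.card_subtype]
    simp only [AddMonoidHom.mem_ker]
  constructor <;> nlinarith

theorem gaussSum_comp_traceToFixed_eq [IsDomain R] [CharZero R] (hσq : ∀ x, σ x = x ^ q)
    (hcard : Fintype.card F = q ^ 2) {p : ℕ} (hp : p.Coprime (2 * (q - 1))) {η : MulChar F R}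
    (hη : η ≠ 1) (hηp : η ^ p = 1) {ψ : AddChar σ.fixedSubfield R} (hψ : ψ ≠ 1) :
    gaussSum η (ψ.compAddMonoidHom (traceToFixed hσ)) = q := by
  classical
  have hq := one_lt_of_card_eq_sq hcard
  have hηtriv {x : F} (hx0 : x ≠ 0) (hx : σ x = x ∨ σ x = -x) : η x = 1 :=
    MulChar.apply_eq_one_of_pow_eq_one hηp hp (by omega)
      (pow_two_mul_sub_one_eq_one hq.le hx0 (by simpa only [hσq] using hx))
  obtain ⟨hK, hker⟩ := card_fixedSubfield_eq_and_card_ker_traceToFixed_eq hσ hσq hcard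
  have h0 : (0 : F) ∈ ({x | traceToFixed hσ x = 0} : Finset F) := by simp
  have hker_triv : ∀ x ∈ ({x | traceToFixed hσ x = 0} : Finset F).erase 0, η x = 1 := by
    intro x hx
    have hTx := congrArg Subtype.val (mem_filter.mp (mem_of_mem_erase hx)).2
    exact hηtriv (ne_of_mem_erase hx)
      (Or.inr (eq_neg_of_add_eq_zero_right (by simpa using hTx)))
  have hsum : ∑ x with traceToFixed hσ x = 0, η x = q - 1 := by
    rw [← add_sum_erase _ _ h0, MulChar.map_zero, zero_add, sum_congr rfl hker_triv, sum_const,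
      card_erase_of_mem h0, hker, nsmul_one, Nat.cast_pred (by omega)]
  have key := gaussSum_comp_traceToFixed_mul hσ hη
    (fun u hu ↦ hηtriv (by simpa) (Or.inl u.2)) hψ
  rw [hK, hsum, mul_comm] at key
  exact mul_right_cancel₀ (sub_ne_zero.mpr (by exact_mod_cast hq.ne')) key

end RingHom

end

/-- Let `p` be an odd prime, `q` a prime power with `q ≡ -1 (mod p)`, and
`F` a finite field with `q²` elements. Let `χ` be a multiplicative character of `F` with
values in `ℂ` of order exactly `p`, and let `r, s` be positive integers with `r + s < p`.
Then the Jacobi sum `J(χ^r, χ^s) = ∑_{x ∈ F} χ^r(x)·χ^s(1 - x)` equals `q`. -/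
theorem statement3 (p : ℕ) (hp : p.Prime) (hodd : Odd p)
    (q : ℕ) (hq : IsPrimePow q) (hmod : (q : ZMod p) = -1)
    (F : Type*) [Field F] [Fintype F] (hcard : Fintype.card F = q ^ 2)
    (χ : MulChar F ℂ) (hχ : orderOf χ = p)
    (r s : ℕ) (hr : 0 < r) (hs : 0 < s) (hrs : r + s < p) :
    ∑ x : F, (χ ^ r) x * (χ ^ s) (1 - x) = (q : ℂ) := by
  obtain ⟨ℓ, n, hℓ, -, hqℓ⟩ := hq
  have : Fact ℓ.Prime := ⟨hℓ.nat_prime⟩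
  have : CharP F ℓ := charP_of_card_eq_prime_pow (hcard.trans (by rw [← hqℓ, ← pow_mul]))
  have hσq (x : F) : iterateFrobenius F ℓ n x = x ^ q := hqℓ ▸ iterateFrobenius_def ..
  have hσ := RingHom.involutive_of_apply_eq_pow hσq hcard
  obtain ⟨ψ, hψ⟩ := AddChar.exists_apply_ne_zero.mpr
    (one_ne_zero : (1 : (iterateFrobenius F ℓ n).fixedSubfield) ≠ 0)
  have hgauss {k : ℕ} (hk : 0 < k) (hkp : k < p) :
      gaussSum (χ ^ k) (ψ.compAddMonoidHom (RingHom.traceToFixed hσ)) = q := by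
    refine RingHom.gaussSum_comp_traceToFixed_eq hσ hσq hcard
      (Nat.coprime_two_mul_sub_one_of_natCast_eq_neg_one hp hodd hmod)
      (pow_ne_one_of_lt_orderOf hk.ne' (hχ ▸ hkp)) ?_ (fun h ↦ hψ (by simp [h]))
    rw [← pow_mul, mul_comm, pow_mul, ← hχ, pow_orderOf_eq_one, one_pow]
  have hrs1 : χ ^ r * χ ^ s ≠ 1 := by
    rw [← pow_add]
    exact pow_ne_one_of_lt_orderOf (by omega) (hχ ▸ hrs)
  have hJ := jacobiSum_mul_nontrivial hrs1 (ψ.compAddMonoidHom (RingHom.traceToFixed hσ))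
  rw [← pow_add, hgauss hr (by omega), hgauss hs (by omega), hgauss (by omega) hrs] at hJ
  exact mul_left_cancel₀ (Nat.cast_ne_zero.mpr (hqℓ ▸ pow_ne_zero n hℓ.ne_zero)) hJ
end

section
/- Let p ≥ 7 be a prime and let φ : ℤ/pℤ → ℤ/pℤ be the map induced by the integer polynomial ((1 − X)^p − 1 + X^p)/p. Then the fiber φ^{−1}(0) has at most p − 3 elements, and for every a ∈ ℤ/pℤ with a ≠ 0 the fiber φ^{−1}(a) has at most p − 4 elements. -/
/-! Modulo `p` the derivative of `φ` is `X ^ (p - 1) - (1 - X) ^ (p - 1)`, which by Fermat's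
little theorem vanishes at every `x ∉ {0, 1}`. So every point of the fiber `φ⁻¹(a)` other than
`0` and `1` is a root of multiplicity at least two of `φ - a`, a nonzero polynomial of degree at
most `p - 1` (the `X ^ p` terms cancel because `p` is odd). Counting roots with multiplicity,
`2 · #φ⁻¹(a) ≤ p - 1 + #(φ⁻¹(a) ∩ {0, 1})`, and `0, 1` lie in `φ⁻¹(0)` only. -/

open Polynomial Finset

namespace Polynomial

variable {R : Type*} [CommRing R]

theorem natDegree_one_sub_X_pow_add_X_pow_lt [Nontrivial R] {n : ℕ} (hn : Odd n) :
    ((1 - X : R[X]) ^ n + X ^ n).natDegree < n := by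
  have h : (1 - X : R[X]) ^ n + X ^ n = X ^ n - (X - C 1) ^ n := by
    rw [map_one, ← neg_sub, hn.neg_pow]; ring
  rw [h]
  refine (isMonicOfDegree_X_pow R n).natDegree_sub_lt hn.pos.ne' ?_
  simpa using (isMonicOfDegree_X_sub_one (1 : R)).pow n

theorem sum_rootMultiplicity_le_natDegree [IsDomain R] (f : R[X]) (S : Finset R) :
    ∑ x ∈ S, f.rootMultiplicity x ≤ f.natDegree := by
  classical
  calc ∑ x ∈ S, f.rootMultiplicity x
      ≤ ∑ x ∈ S ∪ f.roots.toFinset, f.roots.count x := by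
        simp only [count_roots]
        exact sum_le_sum_of_subset subset_union_left
    _ = Multiset.card f.roots :=
        Multiset.sum_count_eq_card fun x hx => mem_union_right _ (Multiset.mem_toFinset.2 hx)
    _ ≤ f.natDegree := card_roots' f

theorem two_mul_card_le_natDegree_add_card [IsDomain R] [DecidableEq R] {f : R[X]} (hf : f ≠ 0)
    {S T : Finset R} (hroot : ∀ x ∈ S, f.IsRoot x)
    (hmult : ∀ x ∈ S, x ∉ T → 2 ≤ f.rootMultiplicity x) :
    2 * #S ≤ f.natDegree + #(S ∩ T) := by
  have hpoint : ∀ x ∈ S, 2 ≤ f.rootMultiplicity x + if x ∈ T then 1 else 0 := by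
    intro x hx
    by_cases hxT : x ∈ T
    · simpa only [hxT, if_true] using Nat.succ_le_succ ((rootMultiplicity_pos hf).2 (hroot x hx))
    · simpa [hxT] using hmult x hx hxT
  calc 2 * #S = ∑ _x ∈ S, 2 := by rw [sum_const, smul_eq_mul, mul_comm]
    _ ≤ ∑ x ∈ S, (f.rootMultiplicity x + if x ∈ T then 1 else 0) := sum_le_sum hpoint
    _ = ∑ x ∈ S, f.rootMultiplicity x + #(S ∩ T) := by
        rw [sum_add_distrib, sum_boole, filter_mem_eq_inter]; simp
    _ ≤ f.natDegree + #(S ∩ T) := by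
        gcongr; exact sum_rootMultiplicity_le_natDegree f S

section FermatQuotientPolynomial

variable {p : ℕ} {P : ℤ[X]}

theorem natDegree_le_of_C_mul_eq (hp : Odd p) (hP : C (p : ℤ) * P = (1 - X) ^ p - 1 + X ^ p) :
    P.natDegree ≤ p - 1 := by
  have hp0 : (p : ℤ) ≠ 0 := by exact_mod_cast hp.pos.ne'
  rw [← natDegree_C_mul hp0, hP, sub_add_eq_add_sub]
  refine (natDegree_sub_le _ _).trans (max_le ?_ ?_)
  · have := natDegree_one_sub_X_pow_add_X_pow_lt (R := ℤ) hp
    omega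
  · simp

theorem derivative_eq_of_C_mul_eq (hp : p ≠ 0) (hP : C (p : ℤ) * P = (1 - X) ^ p - 1 + X ^ p) :
    derivative P = X ^ (p - 1) - (1 - X) ^ (p - 1) := by
  refine mul_left_cancel₀ (C_ne_zero.2 (Int.natCast_ne_zero.2 hp)) ?_
  rw [← derivative_C_mul, hP]
  simp only [derivative_add, derivative_sub, derivative_pow, map_natCast, derivative_one,
    derivative_X, zero_sub, mul_neg, mul_one, sub_zero]
  ring

theorem eval_zero_eq_zero_of_C_mul_eq (hp : p ≠ 0)
    (hP : C (p : ℤ) * P = (1 - X) ^ p - 1 + X ^ p) : P.eval 0 = 0 := by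
  simpa [zero_pow hp, hp] using congrArg (eval 0) hP

theorem eval_one_eq_zero_of_C_mul_eq (hp : p ≠ 0)
    (hP : C (p : ℤ) * P = (1 - X) ^ p - 1 + X ^ p) : P.eval 1 = 0 := by
  simpa [zero_pow hp, hp] using congrArg (eval 1) hP

variable [hp : Fact p.Prime]

theorem isRoot_derivative_map_of_C_mul_eq (hP : C (p : ℤ) * P = (1 - X) ^ p - 1 + X ^ p)
    {x : ZMod p} (hx0 : x ≠ 0) (hx1 : x ≠ 1) :
    (derivative (P.map (Int.castRingHom (ZMod p)))).IsRoot x := by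
  rw [derivative_map, derivative_eq_of_C_mul_eq hp.out.ne_zero hP]
  simp [ZMod.pow_card_sub_one_eq_one hx0, ZMod.pow_card_sub_one_eq_one (sub_ne_zero.2 hx1.symm)]

theorem map_sub_C_ne_zero_of_C_mul_eq (hP : C (p : ℤ) * P = (1 - X) ^ p - 1 + X ^ p)
    (a : ZMod p) : P.map (Int.castRingHom (ZMod p)) - C a ≠ 0 := by
  intro h
  have h0 := congrArg (fun f => (derivative f).eval 0) h
  simp [derivative_map, derivative_eq_of_C_mul_eq hp.out.ne_zero hP,
    zero_pow (Nat.sub_ne_zero_of_lt hp.out.one_lt)] at h0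

theorem two_mul_card_fiber_le_of_C_mul_eq (hp2 : p ≠ 2)
    (hP : C (p : ℤ) * P = (1 - X) ^ p - 1 + X ^ p) (a : ZMod p) :
    2 * #{x | (P.map (Int.castRingHom (ZMod p))).eval x = a} ≤ p - 1 +
      #(({x | (P.map (Int.castRingHom (ZMod p))).eval x = a} : Finset (ZMod p)) ∩ {0, 1}) := by
  set Q := P.map (Int.castRingHom (ZMod p))
  have hQa : Q - C a ≠ 0 := map_sub_C_ne_zero_of_C_mul_eq hP a
  have hdeg : (Q - C a).natDegree ≤ p - 1 := by
    have hQ : Q.natDegree ≤ p - 1 :=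
      natDegree_map_le.trans (natDegree_le_of_C_mul_eq (hp.out.odd_of_ne_two hp2) hP)
    simpa using natDegree_sub_le_of_le hQ (natDegree_C a).le
  refine (two_mul_card_le_natDegree_add_card hQa (by simp [sub_eq_zero]) ?_).trans (by gcongr)
  intro x hx hx01
  simp only [mem_filter, mem_univ, true_and, mem_insert, mem_singleton, not_or] at hx hx01
  refine (one_lt_rootMultiplicity_iff_isRoot hQa).2 ⟨by simp [hx], ?_⟩
  rw [derivative_sub, derivative_C, sub_zero]
  exact isRoot_derivative_map_of_C_mul_eq hP hx01.1 hx01.2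

end FermatQuotientPolynomial

end Polynomial

open Polynomial in
/-- Let `p ≥ 7` be a prime and let `φ : ℤ/pℤ → ℤ/pℤ` be the map induced
by the integer polynomial `((1 - X)^p - 1 + X^p)/p`. Then the fiber `φ⁻¹(0)` has at most
`p - 3` elements, and for every `a ∈ ℤ/pℤ` with `a ≠ 0` the fiber `φ⁻¹(a)` has at most
`p - 4` elements. -/
theorem statement4 (p : ℕ) [hp : Fact p.Prime] (hp7 : 7 ≤ p)
    (P : Polynomial ℤ) (hP : C (p : ℤ) * P = (1 - X) ^ p - 1 + X ^ p)
    (φ : ZMod p → ZMod p)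
    (hφ : ∀ a : ZMod p, φ a = (P.map (Int.castRingHom (ZMod p))).eval a) :
    (Finset.univ.filter fun x : ZMod p => φ x = 0).card ≤ p - 3 ∧
      ∀ a : ZMod p, a ≠ 0 → (Finset.univ.filter fun x : ZMod p => φ x = a).card ≤ p - 4 := by
  have hfiber := two_mul_card_fiber_le_of_C_mul_eq (by omega : p ≠ 2) hP
  simp only [← hφ] at hfiber
  have hφ0 : φ 0 = 0 := by simp [hφ, eval_zero_eq_zero_of_C_mul_eq hp.out.ne_zero hP]
  have hφ1 : φ 1 = 0 := by simp [hφ, eval_one_eq_zero_of_C_mul_eq hp.out.ne_zero hP]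
  refine ⟨?_, fun a ha => ?_⟩
  · have h01 : #(({x | φ x = 0} : Finset (ZMod p)) ∩ {0, 1}) ≤ 2 :=
      (card_le_card inter_subset_right).trans card_le_two
    have := hfiber 0
    omega
  · have hdisj : (({x | φ x = a} : Finset (ZMod p)) ∩ {0, 1}) = ∅ := by
      refine eq_empty_iff_forall_notMem.2 fun x hx => ha ?_
      simp only [mem_inter, mem_filter, mem_univ, true_and, mem_insert, mem_singleton] at hx
      obtain ⟨rfl, rfl | rfl⟩ := hx
      exacts [hφ0, hφ1]
    have := hfiber a
    rw [hdisj, card_empty] at this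
    omega
end

section
/- Let p be an odd prime, K = ℚ(ζ) the p-th cyclotomic field, and F = ℚ(ζ + ζ⁻¹) its maximal real subfield. Then the relative different ideal of 𝓞_K over 𝓞_F is the principal ideal of 𝓞_K generated by ζ − ζ⁻¹. -/
/-!
Since `𝓞_K = ℤ[ζ]`, also `𝓞_K = 𝓞_F[ζ]`, so the conductor of `ζ` is trivial and the different
of `𝓞_K / 𝓞_F` is generated by `f'(ζ)`, where `f` is the minimal polynomial of `ζ` over `F`.
The automorphism `ζ ↦ ζ⁻¹` fixes `F` but not `ζ`, so `f = X² - (ζ + ζ⁻¹) X + 1` and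
`f'(ζ) = 2ζ - (ζ + ζ⁻¹) = ζ - ζ⁻¹`.
-/

open NumberField Polynomial

theorem IsPrimitiveRoot.inv_ne_self {M : Type*} [CommGroupWithZero M] {ζ : M} {n : ℕ}
    (hζ : IsPrimitiveRoot ζ n) (hn : 2 < n) : ζ⁻¹ ≠ ζ := by
  intro h
  have hsq : ζ ^ 2 = 1 := by
    rw [sq]; nth_rewrite 1 [← h]; exact inv_mul_cancel₀ (hζ.ne_zero (by omega))
  exact absurd (Nat.le_of_dvd two_pos (hζ.dvd_of_pow_eq_one 2 hsq)) (by omega)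

theorem IntermediateField.apply_eq_self_of_mem_adjoin {k L : Type*} [Field k] [Field L]
    [Algebra k L] (σ : L →ₐ[k] L) {s : Set L} (hs : ∀ y ∈ s, σ y = y) {x : L}
    (hx : x ∈ IntermediateField.adjoin k s) : σ x = x := by
  induction hx using IntermediateField.adjoin_induction with
  | mem y hy => exact hs y hy
  | algebraMap c => exact σ.commutes c
  | add _ _ _ _ h₁ h₂ => rw [map_add, h₁, h₂]
  | inv _ _ h => rw [map_inv₀, h]
  | mul _ _ _ _ h₁ h₂ => rw [map_mul, h₁, h₂]

theorem IsPrimitiveRoot.notMem_adjoin_add_inv {K : Type*} [Field K] [CharZero K] [Normal ℚ K]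
    {ζ : K} {n : ℕ} (hζ : IsPrimitiveRoot ζ n) (hn : 2 < n) :
    ζ ∉ IntermediateField.adjoin ℚ {ζ + ζ⁻¹} := by
  have hconj : IsConjRoot ℚ ζ⁻¹ ζ := by
    rw [IsConjRoot, ← cyclotomic_eq_minpoly_rat hζ (by omega),
      ← cyclotomic_eq_minpoly_rat hζ.inv (by omega)]
  obtain ⟨σ, hσ⟩ := hconj.exists_algEquiv
  intro hmem
  have hfix := IntermediateField.apply_eq_self_of_mem_adjoin (σ : K →ₐ[ℚ] K) (s := {ζ + ζ⁻¹})
    (by rintro _ rfl; simp [hσ, add_comm]) hmem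
  exact hζ.inv_ne_self hn (hσ.symm.trans hfix)

theorem Algebra.adjoin_eq_top_of_tower (R : Type*) {S A : Type*} [CommSemiring R]
    [CommSemiring S] [CommSemiring A] [Algebra R S] [Algebra S A] [Algebra R A]
    [IsScalarTower R S A] {s : Set A} (h : Algebra.adjoin R s = ⊤) : Algebra.adjoin S s = ⊤ := by
  rw [← Algebra.adjoin_adjoin_of_tower R, h, Algebra.coe_top, Algebra.adjoin_univ]

namespace minpoly

variable {F E : Type*} [Field F] [Field E] [Algebra F E] {z : E} {a : F}

theorem eq_of_algebraMap_eq_add_inv (ha : algebraMap F E a = z + z⁻¹)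
    (hz : z ∉ (algebraMap F E).range) : minpoly F z = X ^ 2 - C a * X + 1 := by
  have hmonic : (X ^ 2 - C a * X + 1 : F[X]).Monic := by monicity!
  have hdeg : (X ^ 2 - C a * X + 1 : F[X]).natDegree = 2 := by compute_degree!
  have hz0 : z ≠ 0 := by rintro rfl; exact hz ⟨0, map_zero _⟩
  have hroot : Polynomial.aeval z (X ^ 2 - C a * X + 1 : F[X]) = 0 := by
    simp only [map_add, map_sub, map_pow, map_mul, map_one, aeval_X, aeval_C, ha]
    field_simp
    ring
  have hint : IsIntegral F z := ⟨_, hmonic, by rwa [← aeval_def]⟩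
  refine (eq_of_monic_of_dvd_of_natDegree_le (monic hint) hmonic (dvd F z hroot) ?_).symm
  rw [hdeg]
  exact (two_le_natDegree_iff hint).mpr hz

theorem aeval_derivative_eq_sub_inv (ha : algebraMap F E a = z + z⁻¹)
    (hz : z ∉ (algebraMap F E).range) :
    Polynomial.aeval z (derivative (minpoly F z)) = z - z⁻¹ := by
  rw [eq_of_algebraMap_eq_add_inv ha hz]
  simp only [derivative_sub, derivative_X_pow_succ, Nat.cast_one, map_add, map_one, pow_one,
    derivative_mul, derivative_C, zero_mul, derivative_X, mul_one, zero_add, derivative_one,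
    add_zero, aeval_sub, map_mul, aeval_X, aeval_C, ha]
  ring

end minpoly

theorem differentIdeal_eq_span_of_adjoin_eq_top (A K : Type*) {L B : Type*} [CommRing A]
    [Field K] [CommRing B] [Field L] [Algebra A K] [Algebra B L] [Algebra A B] [Algebra K L]
    [Algebra A L] [IsScalarTower A K L] [IsScalarTower A B L] [IsDomain A] [IsFractionRing A K]
    [FiniteDimensional K L] [Algebra.IsSeparable K L] [IsIntegralClosure B A L]
    [IsIntegrallyClosed A] [IsDedekindDomain B] [Module.IsTorsionFree A B] {x y : B}
    (hK : Algebra.adjoin K {algebraMap B L x} = ⊤) (hA : Algebra.adjoin A {x} = ⊤)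
    (hy : algebraMap B L y =
      aeval (algebraMap B L x) (derivative (minpoly K (algebraMap B L x)))) :
    differentIdeal A B = Ideal.span {y} := by
  have key := conductor_mul_differentIdeal A K L x hK
  rw [conductor_eq_top_of_adjoin_eq_top hA, Ideal.top_mul] at key
  rw [key]
  congr
  apply IsIntegralClosure.algebraMap_injective B A L
  rw [hy, minpoly.isIntegrallyClosed_eq_field_fractions K L (IsIntegralClosure.isIntegral A L x),
    derivative_map, aeval_map_algebraMap, aeval_algebraMap_apply]

/-- Let `p` be an odd prime, `K = ℚ(ζ)` the `p`-th cyclotomic field, and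
`F = ℚ(ζ + ζ⁻¹)` its maximal real subfield. Then the relative different ideal of `𝓞_K` over
`𝓞_F` is the principal ideal of `𝓞_K` generated by `ζ - ζ⁻¹`. -/
theorem statement7 (p : ℕ) (hp : p.Prime) (hodd : Odd p)
    (K : Type*) [Field K] [NumberField K]
    [IsCyclotomicExtension {p} ℚ K]
    (ζ : K) (hζ : IsPrimitiveRoot ζ p)
    (F : IntermediateField ℚ K) (hF : F = IntermediateField.adjoin ℚ {ζ + ζ⁻¹})
    (x : 𝓞 K) (hx : algebraMap (𝓞 K) K x = ζ - ζ⁻¹) :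
    differentIdeal (𝓞 F) (𝓞 K) = Ideal.span {x} := by
  have hp2 : 2 < p := hp.two_le.lt_of_ne (by rintro rfl; norm_num at hodd)
  have : NeZero p := ⟨hp.ne_zero⟩
  have := IsCyclotomicExtension.isGalois {p} ℚ K
  have hζF : ζ ∉ (algebraMap F K).range := by
    rintro ⟨y, hy⟩
    exact hζ.notMem_adjoin_add_inv hp2 (hF ▸ hy ▸ y.2)
  have hαF : ζ + ζ⁻¹ ∈ F := hF ▸ IntermediateField.mem_adjoin_simple_self ℚ _
  refine differentIdeal_eq_span_of_adjoin_eq_top (𝓞 F) F (x := hζ.toInteger)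
    (Algebra.adjoin_eq_top_of_tower ℚ (IsCyclotomicExtension.adjoin_primitive_root_eq_top hζ))
    (Algebra.adjoin_eq_top_of_tower ℤ
      (IsCyclotomicExtension.adjoin_primitive_root_eq_top hζ.toInteger_isPrimitiveRoot)) ?_
  rw [hx]
  exact (minpoly.aeval_derivative_eq_sub_inv (a := ⟨_, hαF⟩) rfl hζF).symm
end

section
/- Let p be an odd prime and ζ a primitive p-th root of unity. Then in ℤ[ζ] one has the congruence (1 + (ζ − ζ⁻¹)^p)·(1 + (1 − ζ)^p)² ≡ 1 modulo the ideal generated by (1 − ζ)^{p+1}. -/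
/-!
Put `λ = 1 - ζ` and `u = 1 + ζ⁻¹`. Then `ζ - ζ⁻¹ = -λu`, so for odd `p` the left-hand side minus
`1` is `λ^p (2 - u^p)` plus a multiple of `λ^(2p)`. Since `u ≡ 2` modulo `λ` and `λ ∣ p`,
Fermat's little theorem gives `u^p ≡ 2^p ≡ 2` modulo `λ`, whence the extra factor of `λ`.
-/

open NumberField

section CommRing

variable {R : Type*} [CommRing R]

theorem pow_succ_dvd_of_dvd_two_sub_pow {x u : R} {p : ℕ} (hp : p ≠ 0) (h : x ∣ 2 - u ^ p) :
    x ^ (p + 1) ∣ (1 - (x * u) ^ p) * (1 + x ^ p) ^ 2 - 1 := by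
  have expand : (1 - (x * u) ^ p) * (1 + x ^ p) ^ 2 - 1 =
      x ^ p * (2 - u ^ p) + x ^ (2 * p) * (1 - 2 * u ^ p - x ^ p * u ^ p) := by ring
  rw [expand]
  refine dvd_add ?_ (dvd_mul_of_dvd_left (pow_dvd_pow x (by omega)) _)
  rw [pow_succ]
  exact mul_dvd_mul_left _ h

theorem dvd_two_sub_pow_prime {x u : R} {p : ℕ} (hp : p.Prime) (hxp : x ∣ (p : R))
    (hu : x ∣ 2 - u) : x ∣ 2 - u ^ p := by
  have fermat : (p : R) ∣ 2 ^ p - 2 := by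
    simpa using map_dvd (Int.castRingHom R) (Int.prime_dvd_pow_self_sub hp 2)
  have hpow : x ∣ 2 ^ p - u ^ p := hu.trans (sub_dvd_pow_sub_pow 2 u p)
  have split : (2 : R) - u ^ p = (2 ^ p - u ^ p) - (2 ^ p - 2) := by ring
  rw [split]
  exact dvd_sub hpow (hxp.trans fermat)

end CommRing

theorem statement9_general (p : ℕ) (hp : p.Prime) (hodd : Odd p)
    (K : Type*) [Field K]
    (ζ ζ' : 𝓞 K) (hζ : IsPrimitiveRoot ζ p) (hζ' : ζ * ζ' = 1) :
    (1 + (ζ - ζ') ^ p) * (1 + (1 - ζ) ^ p) ^ 2 - 1 ∈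
      Ideal.span {(1 - ζ) ^ (p + 1)} := by
  rw [Ideal.mem_span_singleton]
  have hfactor : (ζ - ζ') ^ p = -((1 - ζ) * (1 + ζ')) ^ p := by
    rw [← hodd.neg_pow]
    congr 1
    linear_combination -hζ'
  have hdvd_p : 1 - ζ ∣ (p : 𝓞 K) := by
    simpa [neg_sub] using (hζ.sub_one_dvd_natCast hp.one_lt).neg_left
  have hdvd_u : 1 - ζ ∣ 2 - (1 + ζ') := ⟨-ζ', by linear_combination -hζ'⟩
  rw [hfactor, ← sub_eq_add_neg]
  exact pow_succ_dvd_of_dvd_two_sub_pow hp.ne_zero (dvd_two_sub_pow_prime hp hdvd_p hdvd_u)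

/-- Let `p` be an odd prime and `ζ` a primitive `p`-th root of unity. Then
in `ℤ[ζ]` (the ring of integers of the `p`-th cyclotomic field) one has the congruence
`(1 + (ζ - ζ⁻¹)^p)·(1 + (1 - ζ)^p)² ≡ 1` modulo the ideal generated by `(1 - ζ)^(p+1)`.
Here `ζ'` denotes the inverse `ζ⁻¹` of `ζ` in the ring of integers. -/
theorem statement9 (p : ℕ) (hp : p.Prime) (hodd : Odd p)
    (K : Type*) [Field K] [Algebra ℚ K]
    [IsCyclotomicExtension {p} ℚ K]
    (ζ ζ' : 𝓞 K) (hζ : IsPrimitiveRoot ζ p) (hζ' : ζ * ζ' = 1) :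
    (1 + (ζ - ζ') ^ p) * (1 + (1 - ζ) ^ p) ^ 2 - 1 ∈
      Ideal.span {(1 - ζ) ^ (p + 1)} :=
  statement9_general p hp hodd K ζ ζ' hζ hζ'
end

section
/- Let p be an odd prime, r an integer with 1 ≤ r ≤ p − 2, δ a nonzero integer, and ℓ a prime with ℓ ∣ δ, ℓ ≠ p and ℓ ∤ (r + 1). Then there exist ℓ-adic integers x, y ∈ ℤ_ℓ with y^p = x^r·(δ − x) and x ≡ 1 (mod ℓ). -/
/-!
With `y = -1` (an admissible choice since `p` is odd) it suffices to find `x ≡ 1 (mod ℓ)` with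
`x ^ r * (δ - x) + 1 = 0`. At `x = 1` this polynomial takes the value `δ ≡ 0 (mod ℓ)`, and its
derivative takes the value `r δ - (r + 1) ≡ -(r + 1) ≢ 0 (mod ℓ)`, so Hensel's lemma lifts the
root `1` modulo `ℓ` to a root in `ℤ_ℓ`.
-/

open Polynomial

namespace PadicInt

variable {p : ℕ} [Fact p.Prime]

theorem norm_eq_one_of_not_dvd {z : ℤ_[p]} (hz : ¬ (p : ℤ_[p]) ∣ z) : ‖z‖ = 1 :=
  (norm_le_one z).antisymm <| not_lt.mp <| (norm_lt_one_iff_dvd z).not.mpr hz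

theorem natCast_dvd_intCast_iff {k : ℤ} : (p : ℤ_[p]) ∣ (k : ℤ_[p]) ↔ (p : ℤ) ∣ k := by
  rw [← norm_lt_one_iff_dvd, norm_int_lt_one_iff_dvd]

theorem exists_isRoot_dvd_sub_of_dvd_eval {F : ℤ_[p][X]} {a : ℤ_[p]}
    (hFa : (p : ℤ_[p]) ∣ F.eval a) (hF'a : ¬ (p : ℤ_[p]) ∣ F.derivative.eval a) :
    ∃ z : ℤ_[p], F.IsRoot z ∧ (p : ℤ_[p]) ∣ z - a := by
  have hF'a_norm : ‖F.derivative.eval a‖ = 1 := norm_eq_one_of_not_dvd hF'a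
  have hnorm : ‖F.aeval a‖ < ‖F.derivative.aeval a‖ ^ 2 := by
    rw [coe_aeval_eq_eval, hF'a_norm, one_pow, norm_lt_one_iff_dvd]
    exact hFa
  obtain ⟨z, hz, hza, -⟩ := hensels_lemma hnorm
  rw [coe_aeval_eq_eval, hF'a_norm, norm_lt_one_iff_dvd] at hza
  exact ⟨z, by rwa [coe_aeval_eq_eval] at hz, hza⟩

theorem exists_pow_mul_sub_eq_neg_one {δ : ℤ_[p]} (r : ℕ) (hδ : (p : ℤ_[p]) ∣ δ)
    (hr : ¬ (p : ℤ_[p]) ∣ (r + 1 : ℤ_[p])) :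
    ∃ x : ℤ_[p], x ^ r * (δ - x) = -1 ∧ (p : ℤ_[p]) ∣ x - 1 := by
  set F : ℤ_[p][X] := C δ * X ^ r - X ^ (r + 1) + 1
  have hF1 : F.eval 1 = δ := by simp [F]
  have hF'1 : F.derivative.eval 1 = r * δ - (r + 1) := by
    simp only [F, derivative_add, derivative_sub, derivative_mul, derivative_C, derivative_X_pow,
      derivative_one, eval_add, eval_sub, eval_mul, eval_C, eval_pow, eval_X,
      eval_zero, one_pow]
    push_cast
    ring
  have hF'1_ndvd : ¬ (p : ℤ_[p]) ∣ F.derivative.eval 1 := by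
    rw [hF'1]
    exact fun h ↦ hr <| by simpa using (hδ.mul_left (r : ℤ_[p])).sub h
  obtain ⟨x, hx, hx1⟩ := exists_isRoot_dvd_sub_of_dvd_eval (hF1 ▸ hδ) hF'1_ndvd
  refine ⟨x, ?_, hx1⟩
  have hFx : x ^ r * (δ - x) + 1 = 0 := by
    rw [← hx.eq_zero]
    simp only [F, eval_add, eval_sub, eval_mul, eval_C, eval_pow, eval_X, eval_one, add_left_inj]
    ring
  linear_combination hFx

end PadicInt

theorem statement10_general (p : ℕ) (hodd : Odd p)
    (r : ℕ)
    (δ : ℤ)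
    (ℓ : ℕ) [hℓ : Fact ℓ.Prime] (hℓδ : (ℓ : ℤ) ∣ δ)
    (hℓr : ¬ (ℓ : ℤ) ∣ (r + 1 : ℤ)) :
    ∃ x y : ℤ_[ℓ], y ^ p = x ^ r * ((δ : ℤ_[ℓ]) - x) ∧ (ℓ : ℤ_[ℓ]) ∣ (x - 1) := by
  have hδ : (ℓ : ℤ_[ℓ]) ∣ (δ : ℤ_[ℓ]) := PadicInt.natCast_dvd_intCast_iff.mpr hℓδ
  have hr : ¬ (ℓ : ℤ_[ℓ]) ∣ (r + 1 : ℤ_[ℓ]) := by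
    rw [← PadicInt.natCast_dvd_intCast_iff] at hℓr
    exact_mod_cast hℓr
  obtain ⟨x, hx, hx1⟩ := PadicInt.exists_pow_mul_sub_eq_neg_one r hδ hr
  exact ⟨x, -1, by rw [hodd.neg_one_pow, hx], hx1⟩

/-- Let `p` be an odd prime, `r` an integer with `1 ≤ r ≤ p - 2`, `δ` a
nonzero integer, and `ℓ` a prime with `ℓ ∣ δ`, `ℓ ≠ p`, `ℓ ∤ (r + 1)`. Then there exist
`ℓ`-adic integers `x, y ∈ ℤ_ℓ` with `y^p = x^r·(δ - x)` and `x ≡ 1 (mod ℓ)`. -/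
theorem statement10 (p : ℕ) (hp : p.Prime) (hodd : Odd p)
    (r : ℕ) (hr1 : 1 ≤ r) (hr2 : r ≤ p - 2)
    (δ : ℤ) (hδ : δ ≠ 0)
    (ℓ : ℕ) [hℓ : Fact ℓ.Prime] (hℓδ : (ℓ : ℤ) ∣ δ) (hℓp : ℓ ≠ p)
    (hℓr : ¬ (ℓ : ℤ) ∣ (r + 1 : ℤ)) :
    ∃ x y : ℤ_[ℓ], y ^ p = x ^ r * ((δ : ℤ_[ℓ]) - x) ∧ (ℓ : ℤ_[ℓ]) ∣ (x - 1) :=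
  statement10_general p hodd r δ ℓ (hℓ := hℓ) hℓδ hℓr
end
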